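/- arXiv:2210.04746 — 6 statements merged into one kernel-verified Lean document; each statement's English description precedes it below -/
import Mathlib

section
/- Let 0 < s ≤ 1, k ≥ 0, and 0 ≤ b < b'. Then for every t ≥ 0, ∫_t^∞ x^k · exp(−b'·x^s) dx ≤ Γ(1 + 1/s) · (k/(s·e))^{k/s} · (2/(b'−b))^{(k+1)/s} · exp(−b·t^s), where in the case k = 0 the factor (k/(s·e))^{k/s} is interpreted as 1. -/
/-! Write `b' = c + c + b` with `c = (b' - b) / 2`. One factor `exp (-c x^s)` absorbs `x^k`,
since `y^a e^{-y} ≤ (a/e)^a` with `y = c x^s`, `a = k/s`; the factor `exp (-b x^s)` is at most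
`exp (-b t^s)` on `[t, ∞)`; and the remaining `exp (-c x^s)` integrates over `(0, ∞)` to
`Γ(1 + 1/s) c^{-1/s}`. -/

open Real MeasureTheory

namespace Real

theorem rpow_mul_exp_neg_le {a y : ℝ} (ha : 0 ≤ a) (hy : 0 ≤ y) :
    y ^ a * exp (-y) ≤ (a / exp 1) ^ a := by
  rcases ha.eq_or_lt with rfl | ha
  · simpa using hy
  rcases hy.eq_or_lt with rfl | hy
  · rw [zero_rpow ha.ne', zero_mul]
    positivity
  have hlog : a * (log y - log a) ≤ y - a := by
    have h := mul_le_mul_of_nonneg_left (log_le_sub_one_of_pos (div_pos hy ha)) ha.le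
    rw [log_div hy.ne' ha.ne'] at h
    calc a * (log y - log a) ≤ a * (y / a - 1) := h
      _ = y - a := by field_simp
  rw [rpow_def_of_pos hy, rpow_def_of_pos (div_pos ha (exp_pos 1)),
    log_div ha.ne' (exp_ne_zero 1), log_exp, ← exp_add, exp_le_exp]
  linarith

theorem rpow_mul_exp_neg_mul_rpow_le {k s c x : ℝ} (hk : 0 ≤ k) (hs : 0 < s) (hc : 0 < c)
    (hx : 0 ≤ x) :
    x ^ k * exp (-c * x ^ s) ≤ (k / (s * exp 1)) ^ (k / s) * c⁻¹ ^ (k / s) := by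
  have hcx : 0 ≤ c * x ^ s := by positivity
  have hxk : x ^ k = (c * x ^ s) ^ (k / s) * c⁻¹ ^ (k / s) := by
    rw [← mul_rpow hcx (inv_nonneg.2 hc.le), mul_right_comm, mul_inv_cancel₀ hc.ne', one_mul,
      ← rpow_mul hx, mul_div_cancel₀ _ hs.ne']
  calc x ^ k * exp (-c * x ^ s)
      = (c * x ^ s) ^ (k / s) * exp (-(c * x ^ s)) * c⁻¹ ^ (k / s) := by rw [hxk, neg_mul]; ring
    _ ≤ (k / s / exp 1) ^ (k / s) * c⁻¹ ^ (k / s) := by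
      gcongr
      exact rpow_mul_exp_neg_le (div_nonneg hk hs.le) hcx
    _ = (k / (s * exp 1)) ^ (k / s) * c⁻¹ ^ (k / s) := by rw [div_div]

theorem integrableOn_exp_neg_mul_rpow {s c : ℝ} (hs : 0 < s) (hc : 0 < c) :
    IntegrableOn (fun x : ℝ ↦ exp (-c * x ^ s)) (Set.Ioi 0) := by
  simpa using integrableOn_rpow_mul_exp_neg_mul_rpow (s := 0) neg_one_lt_zero hs hc

theorem setIntegral_Ioi_exp_neg_mul_rpow_le {s c t : ℝ} (hs : 0 < s) (hc : 0 < c) (ht : 0 ≤ t) :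
    ∫ x in Set.Ioi t, exp (-c * x ^ s) ≤ Gamma (1 + 1 / s) * c⁻¹ ^ (1 / s) := by
  calc ∫ x in Set.Ioi t, exp (-c * x ^ s)
      ≤ ∫ x in Set.Ioi 0, exp (-c * x ^ s) :=
        setIntegral_mono_set (integrableOn_exp_neg_mul_rpow hs hc)
          (.of_forall fun _ ↦ (exp_pos _).le) (Set.Ioi_subset_Ioi ht).eventuallyLE
    _ = Gamma (1 + 1 / s) * c⁻¹ ^ (1 / s) := by
      rw [integral_exp_neg_mul_rpow hs hc, inv_rpow hc.le, ← rpow_neg hc.le, neg_div, add_comm,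
        mul_comm]

theorem rpow_mul_exp_neg_mul_rpow_le_of_le {k s b c t x : ℝ} (hk : 0 ≤ k) (hs : 0 < s)
    (hb : 0 ≤ b) (hc : 0 < c) (ht : 0 ≤ t) (htx : t ≤ x) :
    x ^ k * exp (-(2 * c + b) * x ^ s) ≤
      (k / (s * exp 1)) ^ (k / s) * c⁻¹ ^ (k / s) * exp (-b * t ^ s) * exp (-c * x ^ s) := by
  have hsplit : exp (-(2 * c + b) * x ^ s) =
      exp (-c * x ^ s) * exp (-c * x ^ s) * exp (-b * x ^ s) := by
    rw [← exp_add, ← exp_add]; ring_nf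
  have hbx : exp (-b * x ^ s) ≤ exp (-b * t ^ s) := by
    rw [exp_le_exp, neg_mul, neg_mul, neg_le_neg_iff]
    gcongr
  calc x ^ k * exp (-(2 * c + b) * x ^ s)
      = x ^ k * exp (-c * x ^ s) * exp (-b * x ^ s) * exp (-c * x ^ s) := by rw [hsplit]; ring
    _ ≤ _ := by
      gcongr ?_ * ?_ * _
      exact rpow_mul_exp_neg_mul_rpow_le hk hs hc (ht.trans htx)

end Real

theorem tail_integral_estimate_general (s k b b' t : ℝ) (hs : 0 < s)
    (hk : 0 ≤ k) (hb : 0 ≤ b) (hbb : b < b') (ht : 0 ≤ t) :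
    ∫ x in Set.Ioi t, x ^ k * Real.exp (-b' * x ^ s) ≤
      Real.Gamma (1 + 1 / s) * (k / (s * Real.exp 1)) ^ (k / s) *
        (2 / (b' - b)) ^ ((k + 1) / s) * Real.exp (-b * t ^ s) := by
  set c := (b' - b) / 2
  have hc : 0 < c := by simp only [c]; linarith
  have hc_inv : 2 / (b' - b) = c⁻¹ := by simp only [c, inv_div]
  set M := (k / (s * exp 1)) ^ (k / s) * c⁻¹ ^ (k / s)
  have hpoint : ∀ x ∈ Set.Ioi t,
      x ^ k * exp (-b' * x ^ s) ≤ M * exp (-b * t ^ s) * exp (-c * x ^ s) := fun x hx ↦ by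
    simpa only [c, show 2 * ((b' - b) / 2) + b = b' by ring] using
      rpow_mul_exp_neg_mul_rpow_le_of_le hk hs hb hc ht (le_of_lt hx)
  calc ∫ x in Set.Ioi t, x ^ k * exp (-b' * x ^ s)
      ≤ ∫ x in Set.Ioi t, M * exp (-b * t ^ s) * exp (-c * x ^ s) := by
        refine integral_mono_of_nonneg ?_ ?_
          ((ae_restrict_iff' measurableSet_Ioi).2 (.of_forall hpoint))
        · filter_upwards [ae_restrict_mem measurableSet_Ioi] with x (hx : t < x)
          have := ht.trans hx.le
          positivity
        · exact ((integrableOn_exp_neg_mul_rpow hs hc).mono_set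
            (Set.Ioi_subset_Ioi ht)).const_mul _
    _ = M * exp (-b * t ^ s) * ∫ x in Set.Ioi t, exp (-c * x ^ s) := integral_const_mul _ _
    _ ≤ M * exp (-b * t ^ s) * (Gamma (1 + 1 / s) * c⁻¹ ^ (1 / s)) := by
        gcongr
        exact setIntegral_Ioi_exp_neg_mul_rpow_le hs hc ht
    _ = _ := by
        rw [hc_inv, add_div, rpow_add (inv_pos.2 hc)]
        ring

/-- Tail integral estimate: for `0 < s ≤ 1`, `k ≥ 0`, `0 ≤ b < b'` and `t ≥ 0`,
`∫_t^∞ x^k exp(-b' x^s) dx ≤ Γ(1+1/s) (k/(s e))^{k/s} (2/(b'-b))^{(k+1)/s} exp(-b t^s)`.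
(For `k = 0` the factor `(k/(s e))^{k/s} = 0^0 = 1` under `Real.rpow`.) -/
theorem tail_integral_estimate (s k b b' t : ℝ) (hs : 0 < s) (hs1 : s ≤ 1)
    (hk : 0 ≤ k) (hb : 0 ≤ b) (hbb : b < b') (ht : 0 ≤ t) :
    ∫ x in Set.Ioi t, x ^ k * Real.exp (-b' * x ^ s) ≤
      Real.Gamma (1 + 1 / s) * (k / (s * Real.exp 1)) ^ (k / s) *
        (2 / (b' - b)) ^ ((k + 1) / s) * Real.exp (-b * t ^ s) :=
  tail_integral_estimate_general s k b b' t hs hk hb hbb ht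
end

section
/- Let μ ∈ ℝ, T > 0, let a ∈ ℝ³ with |a| = 1, let p ∈ ℝ³, and let n ∈ ℤ with n ≠ 0. Let λ = x + i·y ∈ ℂ satisfy y² < (1/2)·(√(μ² + (2πT)²) − μ). Then Σ_{j=1}^{3} (p_j + λ·a_j)² − μ ≠ 2π·i·n·T, where the square of a complex number is taken in ℂ. -/
open Complex Real

/-- Non-vanishing of the denominator in the analytic extension of the BCS symbol: for `λ = x + iy`
in the strip `y² < (√(μ² + (2πT)²) - μ)/2`, a unit vector `a ∈ ℝ³`, `p ∈ ℝ³` and `n ∈ ℤ`, `n ≠ 0`,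
one has `(p + λa)² - μ ≠ 2πinT`. -/
theorem analytic_family_no_tanh_zero (μ T : ℝ) (hT : 0 < T) (a p : Fin 3 → ℝ)
    (ha : ∑ j, (a j) ^ 2 = 1) (n : ℤ) (hn : n ≠ 0) (lam : ℂ)
    (hy : lam.im ^ 2 < (Real.sqrt (μ ^ 2 + (2 * Real.pi * T) ^ 2) - μ) / 2) :
    (∑ j, ((p j : ℂ) + lam * (a j : ℂ)) ^ 2) - (μ : ℂ) ≠
      2 * Real.pi * Complex.I * (n : ℂ) * (T : ℂ) := by
  intro h
  set x := lam.re with hx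
  set y := lam.im with hyy
  set P : ℝ := ∑ j, (p j) ^ 2 with hP
  set A : ℝ := ∑ j, a j * p j with hA
  -- rewrite the sum
  have hsum : (∑ j, ((p j : ℂ) + lam * (a j : ℂ)) ^ 2)
      = (P : ℂ) + 2 * lam * (A : ℂ) + lam ^ 2 := by
    have : ∀ j : Fin 3, ((p j : ℂ) + lam * (a j : ℂ)) ^ 2
        = (p j : ℂ) ^ 2 + 2 * lam * ((a j : ℂ) * (p j : ℂ)) + lam ^ 2 * (a j : ℂ) ^ 2 := by
      intro j; ring
    rw [Finset.sum_congr rfl (fun j _ => this j)]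
    rw [Finset.sum_add_distrib, Finset.sum_add_distrib, ← Finset.mul_sum, ← Finset.mul_sum]
    have h1 : (∑ j, ((a j : ℂ)) ^ 2) = 1 := by
      have := congrArg (fun r : ℝ => (r : ℂ)) ha
      push_cast at this
      simpa using this
    have h2 : (∑ j, ((a j : ℂ) * (p j : ℂ))) = (A : ℂ) := by push_cast [hA]; ring_nf
    have h3 : (∑ j, ((p j : ℂ)) ^ 2) = (P : ℂ) := by push_cast [hP]; ring_nf
    rw [h1, h2, h3]; ring
  rw [hsum] at h
  have hre := congrArg Complex.re h
  have him := congrArg Complex.im h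
  simp [Complex.add_re, Complex.add_im, Complex.mul_re, Complex.mul_im, pow_two] at hre him
  -- hre : P + 2*(x*A) + (x*x - y*y) - μ = 0 (some form)
  -- him : 2*(y*A) + (x*y + y*x) = 2*π*n*T (some form)
  -- Cauchy-Schwarz
  have hcs : (∑ j, a j * (p j + x * a j)) ^ 2 ≤ (∑ j, (a j) ^ 2) * (∑ j, (p j + x * a j) ^ 2) :=
    Finset.sum_mul_sq_le_sq_mul_sq Finset.univ a (fun j => p j + x * a j)
  have hB : (∑ j, a j * (p j + x * a j)) = A + x := by
    have : ∀ j : Fin 3, a j * (p j + x * a j) = a j * p j + x * (a j)^2 := fun j => by ring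
    rw [Finset.sum_congr rfl (fun j _ => this j), Finset.sum_add_distrib, ← Finset.mul_sum, ha, hA]
    ring
  have hS : (∑ j, (p j + x * a j) ^ 2) = P + 2 * x * A + x ^ 2 := by
    have : ∀ j : Fin 3, (p j + x * a j)^2 = (p j)^2 + 2 * x * (a j * p j) + x^2 * (a j)^2 :=
      fun j => by ring
    rw [Finset.sum_congr rfl (fun j _ => this j), Finset.sum_add_distrib, Finset.sum_add_distrib,
      ← Finset.mul_sum, ← Finset.mul_sum, ha, hA, hP]
    ring
  rw [hB, hS, ha, one_mul] at hcs
  -- from hre : P + 2xA + x^2 = μ + y^2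
  have hre' : P + 2 * x * A + x ^ 2 = μ + y ^ 2 := by
    rw [hx, hyy]; linear_combination hre
  rw [hre'] at hcs
  -- him : 2 y (A + x) = 2 π n T
  have him' : 2 * y * (A + x) = 2 * π * (n : ℝ) * T := by
    rw [hx, hyy]; linear_combination him
  -- key strip inequality
  have hpi := Real.pi_pos
  have hkey : y ^ 2 * (μ + y ^ 2) < π ^ 2 * T ^ 2 := by
    have h0 : (0:ℝ) ≤ μ ^ 2 + (2 * π * T) ^ 2 := by positivity
    have hs := Real.sq_sqrt h0
    have hsn := Real.sqrt_nonneg (μ ^ 2 + (2 * π * T) ^ 2)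
    rcases le_or_gt 0 (2 * y ^ 2 + μ) with hc | hc
    · nlinarith [sq_nonneg y]
    · nlinarith [sq_nonneg y, mul_pos (mul_pos hpi hpi) (mul_pos hT hT)]
  have hn2 : (1:ℝ) ≤ (n : ℝ) ^ 2 := by
    have : (1:ℤ) ≤ n ^ 2 := by rcases lt_or_gt_of_ne hn with h | h <;> nlinarith
    exact_mod_cast this
  have e1 : y ^ 2 * (A + x) ^ 2 = π ^ 2 * (n : ℝ) ^ 2 * T ^ 2 := by
    linear_combination ((y * (A + x) + π * (n : ℝ) * T) / 2) * him'
  have e2 : y ^ 2 * (A + x) ^ 2 ≤ y ^ 2 * (μ + y ^ 2) :=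
    mul_le_mul_of_nonneg_left hcs (sq_nonneg y)
  have e3 : π ^ 2 * T ^ 2 ≤ π ^ 2 * (n : ℝ) ^ 2 * T ^ 2 := by
    nlinarith [mul_nonneg (mul_nonneg (sq_nonneg π) (sq_nonneg T)) (sub_nonneg.2 hn2)]
  linarith [hkey, e1, e2, e3]
end

section
/- Let p ≥ 1 be a real number, let α ≥ 2 be an integer, and let 2 ≤ k ≤ α be an integer. Then Σ_{j ∈ (ℤ_{>0})^k, j₁+⋯+j_k = α} ∏_{i=1}^{k} j_i^{p·j_i} ≤ min{2 + 4^p, α} · (α−1)^{p(α−1)}. -/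
/-!
Put `g n = n ^ (p n)` for `n > 0` and `g 0 = 0`; the sum is then the `k`-fold convolution
`T k α` of `g`. Bernoulli's inequality for `(1 + c / b) ^ b` gives
`(c + d) ^ (c + d) * (e + d) ^ (e + d) ≤ d ^ d * (c + e + d) ^ (c + e + d)`.
For `k = 2`, with `d = 1` each of the `α - 1` nonzero terms of `T 2 α` is at most `g (α - 1)`;
with `d = 2` all but the two extreme ones are at most `4 ^ p * g (α - 2)`, and
`(α - 2) * g (α - 2) ≤ g (α - 1)` because `p ≥ 1`.
For the induction step, `T (k + 1) α = ∑ g a * T k (α - a)` and the bound on `T k` leave the factor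
`min (2 + 4 ^ p) α` times `T 2 (α - 1) ≤ (α - 2) * g (α - 2) ≤ g (α - 1)`.
-/

open Real Finset

lemma one_add_div_pow_le_one_add_div_pow {c : ℝ} (hc : 0 ≤ c) {d b : ℕ} (hd : 0 < d)
    (hdb : d ≤ b) : (1 + c / d) ^ d ≤ (1 + c / b) ^ b := by
  have hd' : (0 : ℝ) < d := by exact_mod_cast hd
  have hb' : (0 : ℝ) < b := by exact_mod_cast hd.trans_le hdb
  have bernoulli := one_add_mul_self_le_rpow_one_add (s := c / b)
    (by linarith [div_nonneg hc hb'.le]) (p := b / d) (by rw [one_le_div hd']; exact_mod_cast hdb)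
  calc (1 + c / d) ^ d = (1 + b / d * (c / b)) ^ d := by field_simp
    _ ≤ ((1 + c / b) ^ ((b : ℝ) / d)) ^ d := by gcongr
    _ = (1 + c / b) ^ b := by
      rw [← rpow_mul_natCast (by positivity), div_mul_cancel₀ _ hd'.ne', rpow_natCast]

lemma add_pow_mul_pow_le {c d b : ℕ} (hd : 0 < d) (hdb : d ≤ b) :
    (c + d) ^ d * b ^ b ≤ d ^ d * (c + b) ^ b := by
  have hb : 0 < b := hd.trans_le hdb
  have h := one_add_div_pow_le_one_add_div_pow (Nat.cast_nonneg c) hd hdb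
  rw [one_add_div (by positivity), one_add_div (by positivity), div_pow, div_pow,
    div_le_div_iff₀ (by positivity) (by positivity), add_comm (d : ℝ), add_comm (b : ℝ)] at h
  exact_mod_cast (show ((c : ℝ) + d) ^ d * b ^ b ≤ d ^ d * (c + b) ^ b by linarith)

lemma self_pow_mul_self_pow_le (c e : ℕ) {d : ℕ} (hd : 0 < d) :
    (c + d) ^ (c + d) * (e + d) ^ (e + d) ≤ d ^ d * (c + e + d) ^ (c + e + d) :=
  calc (c + d) ^ (c + d) * (e + d) ^ (e + d)
      = (c + d) ^ c * ((c + d) ^ d * (e + d) ^ (e + d)) := by ring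
    _ ≤ (c + e + d) ^ c * (d ^ d * (c + (e + d)) ^ (e + d)) :=
      Nat.mul_le_mul (Nat.pow_le_pow_left (by omega) c) (add_pow_mul_pow_le hd (by omega))
    _ = d ^ d * (c + e + d) ^ (c + e + d) := by ring

lemma sum_antidiagonal_add_two {M : Type*} [AddCommMonoid M] (f : ℕ × ℕ → M) (n : ℕ) :
    ∑ x ∈ antidiagonal (n + 2), f x =
      f (0, n + 2) + f (n + 2, 0) + ∑ x ∈ antidiagonal n, f (x.1 + 1, x.2 + 1) := by
  rw [Nat.sum_antidiagonal_succ, Nat.sum_antidiagonal_succ']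
  simp only [add_assoc]

section TupleProdSum

variable {R : Type*} [CommSemiring R]

def tupleProdSum (f : ℕ → R) (k n : ℕ) : R :=
  ∑ j ∈ Nat.antidiagonalTuple k n, ∏ i, f (j i)

lemma tupleProdSum_succ (f : ℕ → R) (k n : ℕ) :
    tupleProdSum f (k + 1) n = ∑ x ∈ antidiagonal n, f x.1 * tupleProdSum f k x.2 := by
  have h (m l : ℕ) : Nat.antidiagonalTuple m l = finAntidiagonal m l := by
    ext; simp [Nat.mem_antidiagonalTuple]
  simp only [tupleProdSum, h]
  rw [finAntidiagonal, finAntidiagonal.aux, sum_disjiUnion]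
  simp [sum_map, Fin.prod_univ_succ, mul_sum, finAntidiagonal]

lemma tupleProdSum_one (f : ℕ → R) (n : ℕ) : tupleProdSum f 1 n = f n := by
  simp [tupleProdSum]

lemma tupleProdSum_two (f : ℕ → R) (n : ℕ) :
    tupleProdSum f 2 n = ∑ x ∈ antidiagonal n, f x.1 * f x.2 := by
  rw [tupleProdSum_succ]
  simp only [tupleProdSum_one]

lemma tupleProdSum_eq_zero_of_lt {f : ℕ → R} (hf : f 0 = 0) {k n : ℕ} (h : n < k) :
    tupleProdSum f k n = 0 := by
  induction k generalizing n with
  | zero => omega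
  | succ k ih =>
    rw [tupleProdSum_succ]
    refine sum_eq_zero fun x hx => ?_
    rw [HasAntidiagonal.mem_antidiagonal] at hx
    rcases Nat.eq_zero_or_pos x.1 with h0 | hpos
    · rw [h0, hf, zero_mul]
    · rw [ih (by omega), mul_zero]

lemma sum_filter_pos_prod_eq_tupleProdSum (f : ℕ → R) (k n : ℕ) :
    ∑ j ∈ (Nat.antidiagonalTuple k n).filter (fun j => ∀ i, 0 < j i), ∏ i, f (j i) =
      tupleProdSum (fun m => if 0 < m then f m else 0) k n := by
  rw [sum_filter, tupleProdSum]
  exact sum_congr rfl fun j _ => by simp [Fintype.prod_ite_zero]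

end TupleProdSum

/-- Vanishing at `0`, where `0 ^ 0 = 1`, restricts sums over tuples to tuples of positive
integers. -/
noncomputable def posSelfRpow (p : ℝ) (n : ℕ) : ℝ := if 0 < n then (n : ℝ) ^ (p * n) else 0

section PosSelfRpow

variable {p : ℝ}

@[simp] lemma posSelfRpow_zero (p : ℝ) : posSelfRpow p 0 = 0 := rfl

@[simp] lemma posSelfRpow_one (p : ℝ) : posSelfRpow p 1 = 1 := by simp [posSelfRpow]

lemma posSelfRpow_of_pos {n : ℕ} (hn : 0 < n) : posSelfRpow p n = (n : ℝ) ^ (p * n) := if_pos hn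

lemma posSelfRpow_nonneg (p : ℝ) (n : ℕ) : 0 ≤ posSelfRpow p n := by
  unfold posSelfRpow
  split_ifs <;> positivity

lemma posSelfRpow_le (p : ℝ) (n : ℕ) : posSelfRpow p n ≤ (n : ℝ) ^ (p * n) := by
  unfold posSelfRpow
  split_ifs
  · rfl
  · positivity

lemma natCast_rpow_mul_self (p : ℝ) (n : ℕ) : (n : ℝ) ^ (p * n) = ((n ^ n : ℕ) : ℝ) ^ p := by
  rw [mul_comm, rpow_mul (Nat.cast_nonneg _), rpow_natCast, Nat.cast_pow]

lemma posSelfRpow_mul_le (hp : 0 ≤ p) {a b c C : ℕ} (ha : 0 < a) (hb : 0 < b) (hc : 0 < c)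
    (h : a ^ a * b ^ b ≤ C * c ^ c) :
    posSelfRpow p a * posSelfRpow p b ≤ (C : ℝ) ^ p * posSelfRpow p c := by
  rw [posSelfRpow_of_pos ha, posSelfRpow_of_pos hb, posSelfRpow_of_pos hc, natCast_rpow_mul_self,
    natCast_rpow_mul_self, natCast_rpow_mul_self, ← mul_rpow (by positivity) (by positivity),
    ← mul_rpow (by positivity) (by positivity)]
  exact rpow_le_rpow (by positivity) (by exact_mod_cast h) hp

lemma posSelfRpow_succ_mul_succ_le (hp : 0 ≤ p) (a b : ℕ) :
    posSelfRpow p (a + 1) * posSelfRpow p (b + 1) ≤ posSelfRpow p (a + b + 1) := by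
  simpa using posSelfRpow_mul_le hp (C := 1) a.succ_pos b.succ_pos (a + b).succ_pos
    (by simpa using self_pow_mul_self_pow_le a b one_pos)

lemma posSelfRpow_add_two_mul_add_two_le (hp : 0 ≤ p) (a b : ℕ) :
    posSelfRpow p (a + 2) * posSelfRpow p (b + 2) ≤ 4 ^ p * posSelfRpow p (a + b + 2) := by
  simpa using posSelfRpow_mul_le hp (C := 4) (Nat.succ_pos _) (Nat.succ_pos _) (Nat.succ_pos _)
    (self_pow_mul_self_pow_le a b two_pos)

lemma natCast_mul_posSelfRpow_le (hp : 1 ≤ p) (n : ℕ) :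
    n * posSelfRpow p n ≤ posSelfRpow p (n + 1) := by
  rcases Nat.eq_zero_or_pos n with rfl | hn
  · simp
  calc n * posSelfRpow p n ≤ (n : ℝ) ^ p * posSelfRpow p n :=
        mul_le_mul_of_nonneg_right (self_le_rpow_of_one_le (by exact_mod_cast hn) hp)
          (posSelfRpow_nonneg p n)
    _ = ((n ^ (n + 1) : ℕ) : ℝ) ^ p := by
        rw [posSelfRpow_of_pos hn, natCast_rpow_mul_self,
          ← mul_rpow (by positivity) (by positivity), pow_succ', Nat.cast_mul]
    _ ≤ (((n + 1) ^ (n + 1) : ℕ) : ℝ) ^ p :=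
        rpow_le_rpow (by positivity) (by exact_mod_cast Nat.pow_le_pow_left n.le_succ _)
          (by linarith)
    _ = posSelfRpow p (n + 1) := by rw [posSelfRpow_of_pos n.succ_pos, natCast_rpow_mul_self]

lemma tupleProdSum_two_succ_le (hp : 0 ≤ p) (n : ℕ) :
    tupleProdSum (posSelfRpow p) 2 (n + 1) ≤ n * posSelfRpow p n := by
  rcases n with _ | m
  · simp [tupleProdSum_eq_zero_of_lt (posSelfRpow_zero p)]
  rw [tupleProdSum_two, sum_antidiagonal_add_two]
  simp only [posSelfRpow_zero, zero_mul, mul_zero, zero_add]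
  calc ∑ x ∈ antidiagonal m, posSelfRpow p (x.1 + 1) * posSelfRpow p (x.2 + 1)
      ≤ ∑ _x ∈ antidiagonal m, posSelfRpow p (m + 1) := by
        refine sum_le_sum fun x hx => ?_
        rw [HasAntidiagonal.mem_antidiagonal] at hx
        simpa [hx] using posSelfRpow_succ_mul_succ_le hp x.1 x.2
    _ = ((m + 1 : ℕ) : ℝ) * posSelfRpow p (m + 1) := by simp

lemma tupleProdSum_two_le_self (hp : 1 ≤ p) (n : ℕ) :
    tupleProdSum (posSelfRpow p) 2 n ≤ posSelfRpow p n := by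
  rcases n with _ | m
  · simp [tupleProdSum_eq_zero_of_lt (posSelfRpow_zero p)]
  exact (tupleProdSum_two_succ_le (by linarith) m).trans (natCast_mul_posSelfRpow_le hp m)

lemma sum_antidiagonal_posSelfRpow_add_two_le (hp : 1 ≤ p) (n : ℕ) :
    ∑ x ∈ antidiagonal n, posSelfRpow p (x.1 + 2) * posSelfRpow p (x.2 + 2) ≤
      4 ^ p * posSelfRpow p (n + 3) :=
  calc ∑ x ∈ antidiagonal n, posSelfRpow p (x.1 + 2) * posSelfRpow p (x.2 + 2)
      ≤ ∑ _x ∈ antidiagonal n, 4 ^ p * posSelfRpow p (n + 2) := by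
        refine sum_le_sum fun x hx => ?_
        rw [HasAntidiagonal.mem_antidiagonal] at hx
        simpa [hx] using posSelfRpow_add_two_mul_add_two_le (by linarith) x.1 x.2
    _ = 4 ^ p * (((n + 1 : ℕ) : ℝ) * posSelfRpow p (n + 2)) := by
        rw [sum_const, Nat.card_antidiagonal, nsmul_eq_mul]
        ring
    _ ≤ 4 ^ p * (((n + 2 : ℕ) : ℝ) * posSelfRpow p (n + 2)) := by
        gcongr
        · exact posSelfRpow_nonneg p _
        · omega
    _ ≤ 4 ^ p * posSelfRpow p (n + 3) := by
        gcongr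
        exact natCast_mul_posSelfRpow_le hp _

lemma tupleProdSum_two_le_two_add_four_rpow (hp : 1 ≤ p) (n : ℕ) :
    tupleProdSum (posSelfRpow p) 2 n ≤ (2 + 4 ^ p) * posSelfRpow p (n - 1) := by
  by_cases hn : n < 4
  · rcases n with _ | m
    · simp [tupleProdSum_eq_zero_of_lt (posSelfRpow_zero p)]
    refine (tupleProdSum_two_succ_le (by linarith) m).trans ?_
    rw [Nat.add_sub_cancel]
    gcongr
    · exact posSelfRpow_nonneg p m
    · have : (m : ℝ) ≤ 2 := by exact_mod_cast (by omega : m ≤ 2)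
      linarith [rpow_nonneg (by norm_num : (0 : ℝ) ≤ 4) p]
  obtain ⟨l, rfl⟩ := Nat.exists_eq_add_of_le' (not_lt.mp hn)
  rw [tupleProdSum_two, sum_antidiagonal_add_two, sum_antidiagonal_add_two]
  simp only [posSelfRpow_zero, zero_mul, mul_zero, zero_add, posSelfRpow_one, one_mul, mul_one]
  show posSelfRpow p (l + 3) + posSelfRpow p (l + 3) +
      ∑ x ∈ antidiagonal l, posSelfRpow p (x.1 + 2) * posSelfRpow p (x.2 + 2) ≤
    (2 + 4 ^ p) * posSelfRpow p (l + 3)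
  linarith [sum_antidiagonal_posSelfRpow_add_two_le hp l]

lemma tupleProdSum_two_le (hp : 1 ≤ p) (n : ℕ) :
    tupleProdSum (posSelfRpow p) 2 n ≤ min (2 + 4 ^ p) (n : ℝ) * posSelfRpow p (n - 1) := by
  rw [min_mul_of_nonneg _ _ (posSelfRpow_nonneg p _)]
  refine le_min (tupleProdSum_two_le_two_add_four_rpow hp n) ?_
  rcases n with _ | m
  · simp [tupleProdSum_eq_zero_of_lt (posSelfRpow_zero p)]
  refine (tupleProdSum_two_succ_le (by linarith) m).trans ?_
  rw [Nat.add_sub_cancel]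
  gcongr
  · exact posSelfRpow_nonneg p m
  · simp

lemma sum_antidiagonal_mul_posSelfRpow_pred_le (hp : 1 ≤ p) (n : ℕ) :
    ∑ x ∈ antidiagonal n, posSelfRpow p x.1 * posSelfRpow p (x.2 - 1) ≤
      posSelfRpow p (n - 1) := by
  rcases n with _ | m
  · simp
  rw [Nat.sum_antidiagonal_succ']
  simp only [Nat.zero_sub, posSelfRpow_zero, mul_zero, zero_add, Nat.add_sub_cancel]
  rw [← tupleProdSum_two]
  exact tupleProdSum_two_le_self hp m

theorem tupleProdSum_posSelfRpow_le (hp : 1 ≤ p) {k : ℕ} (hk : 2 ≤ k) (n : ℕ) :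
    tupleProdSum (posSelfRpow p) k n ≤ min (2 + 4 ^ p) (n : ℝ) * posSelfRpow p (n - 1) := by
  induction k, hk using Nat.le_induction generalizing n with
  | base => exact tupleProdSum_two_le hp n
  | succ k _ ih =>
    set M := min (2 + 4 ^ p) (n : ℝ)
    have hM : 0 ≤ M := le_min (by positivity) n.cast_nonneg
    calc tupleProdSum (posSelfRpow p) (k + 1) n
        = ∑ x ∈ antidiagonal n, posSelfRpow p x.1 * tupleProdSum (posSelfRpow p) k x.2 :=
          tupleProdSum_succ _ k n
      _ ≤ ∑ x ∈ antidiagonal n, posSelfRpow p x.1 * (M * posSelfRpow p (x.2 - 1)) := by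
          refine sum_le_sum fun x hx => mul_le_mul_of_nonneg_left ((ih x.2).trans ?_)
            (posSelfRpow_nonneg p _)
          rw [HasAntidiagonal.mem_antidiagonal] at hx
          refine mul_le_mul_of_nonneg_right (min_le_min_left _ ?_) (posSelfRpow_nonneg p _)
          exact_mod_cast (by omega : x.2 ≤ n)
      _ = M * ∑ x ∈ antidiagonal n, posSelfRpow p x.1 * posSelfRpow p (x.2 - 1) := by
          rw [mul_sum]
          exact sum_congr rfl fun _ _ => by ring
      _ ≤ M * posSelfRpow p (n - 1) :=
          mul_le_mul_of_nonneg_left (sum_antidiagonal_mul_posSelfRpow_pred_le hp n) hM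

end PosSelfRpow

theorem tuple_sum_rpow_bound_general (p : ℝ) (hp : 1 ≤ p) (α k : ℕ) (hk : 2 ≤ k) :
    ∑ j ∈ (Finset.Nat.antidiagonalTuple k α).filter (fun j => ∀ i, 0 < j i),
        ∏ i, ((j i : ℝ) ^ (p * (j i : ℝ))) ≤
      min (2 + (4 : ℝ) ^ p) (α : ℝ) * ((α : ℝ) - 1) ^ (p * ((α : ℝ) - 1)) := by
  rw [sum_filter_pos_prod_eq_tupleProdSum fun m : ℕ => (m : ℝ) ^ (p * m)]
  refine (tupleProdSum_posSelfRpow_le hp hk α).trans ?_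
  rcases α with _ | m
  · simp [min_eq_right (by positivity : (0 : ℝ) ≤ 2 + 4 ^ p)]
  push_cast
  rw [add_sub_cancel_right]
  exact mul_le_mul_of_nonneg_left (posSelfRpow_le p m) (le_min (by positivity) (by positivity))

/-- For a real `p ≥ 1` and integers `2 ≤ k ≤ α`, the sum over ordered `k`-tuples of positive
integers summing to `α` of `∏ i, jᵢ^(p·jᵢ)` is bounded by
`min (2 + 4^p) α * (α-1)^(p(α-1))`. -/
theorem tuple_sum_rpow_bound (p : ℝ) (hp : 1 ≤ p) (α k : ℕ) (hk : 2 ≤ k) (hkα : k ≤ α) :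
    ∑ j ∈ (Finset.Nat.antidiagonalTuple k α).filter (fun j => ∀ i, 0 < j i),
        ∏ i, ((j i : ℝ) ^ (p * (j i : ℝ))) ≤
      min (2 + (4 : ℝ) ^ p) (α : ℝ) * ((α : ℝ) - 1) ^ (p * ((α : ℝ) - 1)) :=
  tuple_sum_rpow_bound_general p hp α k hk
end

section
/- Let p ≥ 1 be a real number and let α ≥ 2 be an integer. Then Σ_{k=2}^{α} Σ_{j ∈ (ℤ_{>0})^k, j₁+⋯+j_k = α} ∏_{i=1}^{k} j_i^{p·j_i} ≤ (2 + 4^p) · α^{p·α}. -/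
/-!
Write `f m = m ^ (p * m)` and let `G n` be the sum of `∏ f jᵢ` over all compositions of `n`.
Splitting off the first part gives `G n = f n + ∑_{0<m<n} f m * G (n - m)`.
The term `C(n,m) m^m (n-m)^(n-m)` of the binomial expansion of `n^n = (m + (n-m))^n`, together
with `p ≥ 1`, gives `f m * f (n - m) ≤ f n / C(n,m)`, and `∑_{0<m<n} 1 / C(n,m) ≤ 2/3`.
Strong induction then yields `G n ≤ 3 f n`; since the compositions with one part contribute
exactly `f n`, those with at least two parts contribute at most `2 f n`.
-/

open Finset

noncomputable def kCompositionSum (f : ℕ → ℝ) (k n : ℕ) : ℝ :=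
  ∑ j ∈ (Finset.Nat.antidiagonalTuple k n).filter (fun j => ∀ i, 0 < j i), ∏ i, f (j i)

noncomputable def compositionSum (f : ℕ → ℝ) (n : ℕ) : ℝ :=
  ∑ k ∈ range (n + 1), kCompositionSum f k n

namespace kCompositionSum

variable (f : ℕ → ℝ)

theorem eq_zero_of_lt {k n : ℕ} (h : n < k) : kCompositionSum f k n = 0 := by
  refine sum_eq_zero fun j hj => absurd h (not_lt.2 ?_)
  simp only [mem_filter, Finset.Nat.mem_antidiagonalTuple] at hj
  calc k = ∑ _i : Fin k, 1 := by simp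
    _ ≤ ∑ i, j i := sum_le_sum fun i _ => hj.2 i
    _ = n := hj.1

theorem zero_zero : kCompositionSum f 0 0 = 1 := by
  simp [kCompositionSum, Finset.Nat.antidiagonalTuple_zero_zero]

theorem zero_of_pos {n : ℕ} (hn : 0 < n) : kCompositionSum f 0 n = 0 := by
  obtain ⟨n, rfl⟩ := Nat.exists_eq_add_of_lt hn
  simp [kCompositionSum, Finset.Nat.antidiagonalTuple_zero_succ]

theorem one {n : ℕ} (hn : 0 < n) : kCompositionSum f 1 n = f n := by
  simp [kCompositionSum, Finset.Nat.antidiagonalTuple_one, filter_singleton, hn]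

theorem mem_cons_iff {k n m : ℕ} {x : Fin k → ℕ} :
    Fin.cons m x ∈ (Finset.Nat.antidiagonalTuple (k + 1) n).filter (fun j => ∀ i, 0 < j i) ↔
      m ∈ Icc 1 n ∧
        x ∈ (Finset.Nat.antidiagonalTuple k (n - m)).filter (fun j => ∀ i, 0 < j i) := by
  simp only [mem_filter, Finset.Nat.mem_antidiagonalTuple, Fin.sum_cons, Fin.forall_fin_succ,
    Fin.cons_zero, Fin.cons_succ, mem_Icc]
  constructor
  · rintro ⟨hsum, hm, hx⟩
    exact ⟨⟨hm, by omega⟩, by omega, hx⟩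
  · rintro ⟨⟨hm, hmn⟩, hsum, hx⟩
    exact ⟨by omega, hm, hx⟩

theorem succ (k n : ℕ) :
    kCompositionSum f (k + 1) n = ∑ m ∈ Icc 1 n, f m * kCompositionSum f k (n - m) := by
  simp only [kCompositionSum, mul_sum, sum_sigma']
  refine sum_nbij' (fun j => ⟨j 0, Fin.tail j⟩) (fun x => Fin.cons x.1 x.2) ?_ ?_
    (fun j _ => Fin.cons_self_tail j) (fun x _ => by simp) (fun j _ => Fin.prod_univ_succ _)
  · intro j hj
    rw [← Fin.cons_self_tail j, mem_cons_iff] at hj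
    simpa [mem_sigma] using hj
  · intro x hx
    rw [mem_cons_iff]
    simpa [mem_sigma] using hx

end kCompositionSum

namespace compositionSum

variable {f : ℕ → ℝ}

theorem eq_sum_mul {n : ℕ} (hn : 0 < n) :
    compositionSum f n = ∑ m ∈ Icc 1 n, f m * compositionSum f (n - m) := by
  rw [compositionSum, sum_range_succ', kCompositionSum.zero_of_pos f hn, add_zero]
  simp only [kCompositionSum.succ]
  rw [sum_comm]
  refine sum_congr rfl fun m hm => ?_
  rw [← mul_sum, compositionSum]
  congr 1
  refine (sum_subset (range_subset_range.2 ?_) fun k _ hk => ?_).symm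
  · simp only [mem_Icc] at hm
    omega
  · exact kCompositionSum.eq_zero_of_lt f (by simpa using hk)

theorem eq_add_sum_mul {n : ℕ} (hn : 0 < n) :
    compositionSum f n = f n + ∑ m ∈ Ioo 0 n, f m * compositionSum f (n - m) := by
  have hIcc : Icc 1 n = insert n (Ioo 0 n) := by
    ext m; simp only [mem_Icc, mem_insert, mem_Ioo]; omega
  rw [eq_sum_mul hn, hIcc, sum_insert (by simp), Nat.sub_self, compositionSum,
    zero_add, sum_range_one, kCompositionSum.zero_zero, mul_one]

theorem eq_add_sum_Icc_two {n : ℕ} (hn : 0 < n) :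
    compositionSum f n = f n + ∑ k ∈ Icc 2 n, kCompositionSum f k n := by
  have hrange : range (n + 1) = insert 0 (insert 1 (Icc 2 n)) := by
    ext k; simp only [mem_range, mem_insert, mem_Icc]; omega
  rw [compositionSum, hrange, sum_insert (by simp), sum_insert (by simp),
    kCompositionSum.zero_of_pos f hn, kCompositionSum.one f hn, zero_add]

theorem le_mul (hf : ∀ n, 0 ≤ f n) {c : ℝ}
    (hc : ∀ n, c * ∑ m ∈ Ioo 0 n, f m * f (n - m) ≤ (c - 1) * f n) {n : ℕ} (hn : 0 < n) :
    compositionSum f n ≤ c * f n := by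
  induction n using Nat.strong_induction_on with
  | _ n ih =>
  have hstep : ∑ m ∈ Ioo 0 n, f m * compositionSum f (n - m)
      ≤ c * ∑ m ∈ Ioo 0 n, f m * f (n - m) := by
    rw [mul_sum]
    refine sum_le_sum fun m hm => ?_
    simp only [mem_Ioo] at hm
    calc f m * compositionSum f (n - m) ≤ f m * (c * f (n - m)) :=
          mul_le_mul_of_nonneg_left (ih _ (by omega) (by omega)) (hf m)
      _ = c * (f m * f (n - m)) := by ring
  linarith [eq_add_sum_mul (f := f) hn, hc n]

theorem sum_Icc_two_le (hf : ∀ n, 0 ≤ f n) {c : ℝ}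
    (hc : ∀ n, c * ∑ m ∈ Ioo 0 n, f m * f (n - m) ≤ (c - 1) * f n) (n : ℕ) :
    ∑ k ∈ Icc 2 n, kCompositionSum f k n ≤ (c - 1) * f n := by
  rcases Nat.eq_zero_or_pos n with rfl | hn
  · simpa using hc 0
  · linarith [eq_add_sum_Icc_two (f := f) hn, le_mul hf hc hn]

end compositionSum

theorem Nat.choose_two_le_choose {n m : ℕ} (hm : 2 ≤ m) (hmn : m + 2 ≤ n) :
    n.choose 2 ≤ n.choose m := by
  wlog h : m ≤ n / 2 generalizing m
  · rw [← Nat.choose_symm (by omega : m ≤ n)]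
    exact this (by omega) (by omega) (by omega)
  induction m, hm using Nat.le_induction with
  | base => exact le_rfl
  | succ k hk ih =>
    exact (ih (by omega) (by omega)).trans (Nat.choose_le_succ_of_lt_half_left (by omega))

theorem sum_Ioo_inv_choose_le (n : ℕ) : ∑ m ∈ Ioo 0 n, ((n.choose m : ℝ))⁻¹ ≤ 2 / 3 := by
  rcases lt_or_ge n 3 with hn | hn
  · interval_cases n <;> norm_num [show Ioo 0 2 = {1} by rfl, show Ioo 0 1 = ∅ by rfl]
  have hsplit : Ioo 0 n = insert 1 (insert (n - 1) (Icc 2 (n - 2))) := by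
    ext m; simp only [mem_Ioo, mem_insert, mem_Icc]; omega
  have hmiddle :
      ∑ m ∈ Icc 2 (n - 2), ((n.choose m : ℝ))⁻¹ ≤ (n - 3) * ((n.choose 2 : ℝ))⁻¹ := by
    have hcard : ((Icc 2 (n - 2)).card : ℝ) = n - 3 := by
      rw [Nat.card_Icc, Nat.cast_sub (by omega)]
      push_cast [Nat.cast_sub (by omega : 2 ≤ n)]
      ring
    rw [← hcard, ← nsmul_eq_mul]
    refine sum_le_card_nsmul _ _ _ fun m hm => ?_
    simp only [mem_Icc] at hm
    have h2 : 0 < n.choose 2 := Nat.choose_pos (by omega)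
    gcongr
    exact Nat.choose_two_le_choose hm.1 (by omega)
  rw [hsplit, sum_insert (by simp; omega), sum_insert (by simp; omega), Nat.choose_one_right,
    Nat.choose_symm_of_eq_add (show n = (n - 1) + 1 by omega), Nat.choose_one_right]
  rw [Nat.cast_choose_two] at hmiddle
  have hn' : (3 : ℝ) ≤ n := by exact_mod_cast hn
  -- `2/n + 2(n-3)/(n(n-1)) ≤ 2/3` reduces to `(n-3)(n-4) ≥ 0`, which needs `n` to be an integer.
  have hint : (0 : ℝ) ≤ (n - 3) * (n - 4) := by
    rcases hn.eq_or_lt with rfl | h4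
    · norm_num
    · have h4' : (4 : ℝ) ≤ n := by exact_mod_cast h4
      nlinarith
  have key : (n : ℝ)⁻¹ + ((n : ℝ)⁻¹ + (n - 3) * ((n : ℝ) * (n - 1) / 2)⁻¹) ≤ 2 / 3 := by
    have h1 : (0 : ℝ) < n - 1 := by linarith
    rw [inv_div]
    field_simp
    nlinarith
  linarith

theorem Nat.pow_self_mul_pow_self_mul_choose_le (a b : ℕ) :
    a ^ a * b ^ b * (a + b).choose a ≤ (a + b) ^ (a + b) := by
  rw [add_pow]
  have := single_le_sum (f := fun k => a ^ k * b ^ (a + b - k) * (a + b).choose k)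
    (fun k _ => Nat.zero_le _) (mem_range.2 (by omega : a < a + b + 1))
  simpa using this

theorem rpow_self_mul_rpow_self_mul_choose_le {p : ℝ} (hp : 1 ≤ p) (a b : ℕ) :
    (a : ℝ) ^ (p * a) * (b : ℝ) ^ (p * b) * (a + b).choose a ≤
      ((a + b : ℕ) : ℝ) ^ (p * (a + b : ℕ)) := by
  have hrpow (m : ℕ) : (m : ℝ) ^ (p * m) = ((m : ℝ) ^ m) ^ p := by
    rw [mul_comm, Real.rpow_mul (Nat.cast_nonneg m), Real.rpow_natCast]
  have hchoose : (1 : ℝ) ≤ (a + b).choose a := by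
    exact_mod_cast Nat.choose_pos (Nat.le_add_right a b)
  have hbinom : ((a : ℝ) ^ a * (b : ℝ) ^ b) * (a + b).choose a ≤ ((a + b : ℕ) : ℝ) ^ (a + b) := by
    exact_mod_cast Nat.pow_self_mul_pow_self_mul_choose_le a b
  rw [hrpow, hrpow, hrpow, ← Real.mul_rpow (by positivity) (by positivity)]
  calc ((a : ℝ) ^ a * (b : ℝ) ^ b) ^ p * (a + b).choose a
      ≤ ((a : ℝ) ^ a * (b : ℝ) ^ b) ^ p * ((a + b).choose a : ℝ) ^ p := by
        gcongr
        exact Real.self_le_rpow_of_one_le hchoose hp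
    _ = ((a : ℝ) ^ a * (b : ℝ) ^ b * (a + b).choose a) ^ p :=
        (Real.mul_rpow (by positivity) (by positivity)).symm
    _ ≤ (((a + b : ℕ) : ℝ) ^ (a + b)) ^ p := by gcongr

theorem sum_Ioo_rpow_self_mul_rpow_self_le {p : ℝ} (hp : 1 ≤ p) (n : ℕ) :
    ∑ m ∈ Ioo 0 n, (m : ℝ) ^ (p * m) * ((n - m : ℕ) : ℝ) ^ (p * (n - m : ℕ)) ≤
      2 / 3 * (n : ℝ) ^ (p * n) := by
  calc ∑ m ∈ Ioo 0 n, (m : ℝ) ^ (p * m) * ((n - m : ℕ) : ℝ) ^ (p * (n - m : ℕ))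
      ≤ ∑ m ∈ Ioo 0 n, ((n.choose m : ℝ))⁻¹ * (n : ℝ) ^ (p * n) := by
        refine sum_le_sum fun m hm => ?_
        have hmn : m + (n - m) = n := Nat.add_sub_cancel' (mem_Ioo.1 hm).2.le
        have h := rpow_self_mul_rpow_self_mul_choose_le hp m (n - m)
        rw [hmn] at h
        rw [inv_mul_eq_div, le_div_iff₀ (by exact_mod_cast Nat.choose_pos (by omega))]
        exact h
    _ = (∑ m ∈ Ioo 0 n, ((n.choose m : ℝ))⁻¹) * (n : ℝ) ^ (p * n) := (sum_mul ..).symm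
    _ ≤ 2 / 3 * (n : ℝ) ^ (p * n) := by
        gcongr
        exact sum_Ioo_inv_choose_le n

theorem total_tuple_sum_rpow_bound_general (p : ℝ) (hp : 1 ≤ p) (α : ℕ) :
    ∑ k ∈ Finset.Icc 2 α,
        ∑ j ∈ (Finset.Nat.antidiagonalTuple k α).filter (fun j => ∀ i, 0 < j i),
          ∏ i, ((j i : ℝ) ^ (p * (j i : ℝ))) ≤
      (2 + (4 : ℝ) ^ p) * (α : ℝ) ^ (p * (α : ℝ)) := by
  have h := compositionSum.sum_Icc_two_le (f := fun m : ℕ => (m : ℝ) ^ (p * m)) (c := 3)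
    (fun m => by positivity) (fun n => by linarith [sum_Ioo_rpow_self_mul_rpow_self_le hp n]) α
  refine h.trans (mul_le_mul_of_nonneg_right ?_ (by positivity))
  linarith [Real.rpow_nonneg (by norm_num : (0 : ℝ) ≤ 4) p]

/-- For a real `p ≥ 1` and an integer `α ≥ 2`, summing over `2 ≤ k ≤ α` the sums over ordered
`k`-tuples of positive integers summing to `α` of `∏ i, jᵢ^(p·jᵢ)` gives at most
`(2 + 4^p) * α^(pα)`. -/
theorem total_tuple_sum_rpow_bound (p : ℝ) (hp : 1 ≤ p) (α : ℕ) (hα : 2 ≤ α) :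
    ∑ k ∈ Finset.Icc 2 α,
        ∑ j ∈ (Finset.Nat.antidiagonalTuple k α).filter (fun j => ∀ i, 0 < j i),
          ∏ i, ((j i : ℝ) ^ (p * (j i : ℝ))) ≤
      (2 + (4 : ℝ) ^ p) * (α : ℝ) ^ (p * (α : ℝ)) :=
  total_tuple_sum_rpow_bound_general p hp α
end

section
/- Let k ∈ ℕ, b > 0, and t ≥ 0. Then Σ_{n = ⌊t⌋+1}^{∞} n^k · exp(−b·√n) ≤ b^{−(2k+2)} · (2k+3)! · max{1, b²·t}^{k+1} · exp(−b·√t). -/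
/-!
Write `m = 2k + 2` and `Γ(m + 1, y) = ∫_y^∞ s^m e^{-s} ds`. Substituting `y = b√u`, the tail is a
discrete version of `b^{-m} ∫_{b√t}^∞ e^{-y} d(y^m)`, because `n^k ≤ n^{k+1} - (n - 1)^{k+1}`.
Summation by parts bounds it by `b^{-m} Γ(m + 1, b√t)` without any integral: each step is the
monotonicity of `z ↦ Γ(m + 1, z) - C e^{-z}` on `[x, ∞)` when `C ≤ x^m`, whose derivative is
`(C - z^m) e^{-z}`. Finally `Γ(m + 1, y) = m! e^{-y} Σ_{j ≤ m} y^j / j!` is at most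
`(m + 1)! max(1, y)^m e^{-y}`.
-/

open Real Finset

/-- The upper incomplete Gamma function `Γ(m + 1, y) = ∫_y^∞ s^m e^{-s} ds`; the recursion is
integration by parts. -/
noncomputable def upperGammaNat : ℕ → ℝ → ℝ
  | 0, y => exp (-y)
  | m + 1, y => (m + 1) * upperGammaNat m y + y ^ (m + 1) * exp (-y)

theorem hasDerivAt_upperGammaNat (m : ℕ) (y : ℝ) :
    HasDerivAt (upperGammaNat m) (-(y ^ m * exp (-y))) y := by
  have hexp : HasDerivAt (fun z => exp (-z)) (-exp (-y)) y := by
    simpa using (hasDerivAt_neg y).exp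
  induction m with
  | zero => simpa [upperGammaNat] using hexp
  | succ m ih =>
    have h := (ih.const_mul ((m : ℝ) + 1)).fun_add ((hasDerivAt_pow (m + 1) y).fun_mul hexp)
    refine h.congr_deriv ?_
    push_cast
    ring

theorem pow_mul_exp_neg_le_upperGammaNat (m : ℕ) {x y : ℝ} (hx : 0 ≤ x) (hxy : x ≤ y) :
    x ^ m * exp (-y) ≤ upperGammaNat m y := by
  induction m with
  | zero => simp [upperGammaNat]
  | succ m ih =>
    have hq : 0 ≤ upperGammaNat m y := (by positivity : 0 ≤ x ^ m * exp (-y)).trans ih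
    have hpow : x ^ (m + 1) ≤ y ^ (m + 1) := pow_le_pow_left₀ hx hxy _
    simp only [upperGammaNat]
    nlinarith [exp_pos (-y)]

theorem upperGammaNat_le (m : ℕ) {y : ℝ} (hy : 0 ≤ y) :
    upperGammaNat m y ≤ (m + 1).factorial * max 1 y ^ m * exp (-y) := by
  induction m with
  | zero => simp [upperGammaNat]
  | succ m ih =>
    set M := max 1 y
    have hM : 1 ≤ M := le_max_left 1 y
    have hfac : ((m + 1 + 1).factorial : ℝ) = (m + 2) * (m + 1).factorial := by
      push_cast [Nat.factorial_succ]; ring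
    have hfac1 : (1 : ℝ) ≤ (m + 1).factorial := by exact_mod_cast (m + 1).factorial_pos
    calc (m + 1) * upperGammaNat m y + y ^ (m + 1) * exp (-y)
        ≤ (m + 1) * ((m + 1).factorial * M ^ m * exp (-y)) + M ^ (m + 1) * exp (-y) := by
          gcongr
          exact le_max_right 1 y
      _ ≤ (m + 1) * ((m + 1).factorial * M ^ (m + 1) * exp (-y))
            + (m + 1).factorial * M ^ (m + 1) * exp (-y) := by
          gcongr
          · omega
          · exact le_mul_of_one_le_left (by positivity) hfac1
      _ = ((m + 1 + 1).factorial : ℝ) * M ^ (m + 1) * exp (-y) := by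
          rw [hfac]; ring

theorem antitoneOn_upperGammaNat_sub_mul_exp_neg (m : ℕ) {C x : ℝ} (hx : 0 ≤ x)
    (hC : C ≤ x ^ m) : AntitoneOn (fun z => upperGammaNat m z - C * exp (-z)) (Set.Ici x) := by
  have hderiv (z : ℝ) : HasDerivAt (fun z => upperGammaNat m z - C * exp (-z))
      ((C - z ^ m) * exp (-z)) z := by
    refine ((hasDerivAt_upperGammaNat m z).sub ((hasDerivAt_neg z).exp.const_mul C)).congr_deriv ?_
    ring
  refine antitoneOn_of_deriv_nonpos (convex_Ici x)
    (fun z _ => (hderiv z).continuousAt.continuousWithinAt)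
    (fun z _ => (hderiv z).differentiableAt.differentiableWithinAt) fun z hz => ?_
  rw [interior_Ici, Set.mem_Ioi] at hz
  rw [(hderiv z).deriv]
  have : C ≤ z ^ m := hC.trans (pow_le_pow_left₀ hx hz.le m)
  exact mul_nonpos_of_nonpos_of_nonneg (by linarith) (exp_pos _).le

theorem sum_Ioc_mul_exp_neg_add_le (m : ℕ) {y c : ℕ → ℝ} (hy : Monotone y) (hy0 : 0 ≤ y 0)
    (hc : ∀ n, c (n + 1) ≤ y (n + 1) ^ m - y n ^ m) {N M : ℕ} (hNM : N ≤ M) :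
    ∑ n ∈ Ioc N M, c n * exp (-y n)
        + (upperGammaNat m (y (M + 1)) - y M ^ m * exp (-y (M + 1)))
      ≤ upperGammaNat m (y (N + 1)) - y N ^ m * exp (-y (N + 1)) := by
  induction M, hNM using Nat.le_induction with
  | base => simp
  | succ M hNM ih =>
    have hterm : c (M + 1) * exp (-y (M + 1)) ≤ (y (M + 1) ^ m - y M ^ m) * exp (-y (M + 1)) :=
      mul_le_mul_of_nonneg_right (hc M) (exp_pos _).le
    have hstep := antitoneOn_upperGammaNat_sub_mul_exp_neg m
      (hy0.trans (hy (Nat.zero_le (M + 1)))) le_rfl Set.self_mem_Ici (hy (M + 1).le_succ)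
      (hy (M + 1).le_succ)
    rw [sum_Ioc_succ_top hNM]
    linarith

theorem pow_le_add_one_pow_succ_sub_pow {R : Type*} [CommRing R] [LinearOrder R]
    [IsStrictOrderedRing R] {x : R} (hx : 0 ≤ x) (k : ℕ) :
    (x + 1) ^ k ≤ (x + 1) ^ (k + 1) - x ^ (k + 1) := by
  have : x * x ^ k ≤ x * (x + 1) ^ k := by gcongr; linarith
  rw [pow_succ', pow_succ']
  linarith

theorem mul_sum_Ioc_floor_pow_mul_exp_neg_sqrt_le (k : ℕ) {b t : ℝ} (hb : 0 < b) (ht : 0 ≤ t)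
    {M : ℕ} (hM : ⌊t⌋₊ ≤ M) :
    b ^ (2 * k + 2) * ∑ n ∈ Ioc ⌊t⌋₊ M, (n : ℝ) ^ k * exp (-b * √n)
      ≤ upperGammaNat (2 * k + 2) (b * √t) := by
  set N := ⌊t⌋₊
  set m := 2 * k + 2
  set y : ℕ → ℝ := fun n => b * √n
  have hpow {x : ℝ} (hx : 0 ≤ x) : (b * √x) ^ m = b ^ m * x ^ (k + 1) := by
    rw [show m = 2 * (k + 1) by ring, pow_mul, pow_mul, mul_pow, sq_sqrt hx, mul_pow]
  have hy : Monotone y := fun i j hij => by simp only [y]; gcongr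
  have hc (n : ℕ) : b ^ m * ((n + 1 : ℕ) : ℝ) ^ k ≤ y (n + 1) ^ m - y n ^ m := by
    simp only [y]
    rw [hpow (by positivity), hpow (by positivity), ← mul_sub]
    push_cast
    gcongr
    exact pow_le_add_one_pow_succ_sub_pow (Nat.cast_nonneg n) k
  have habel := sum_Ioc_mul_exp_neg_add_le m hy (by simp [y])
    (c := fun n => b ^ m * (n : ℝ) ^ k) hc hM
  have htail : y M ^ m * exp (-y (M + 1)) ≤ upperGammaNat m (y (M + 1)) :=
    pow_mul_exp_neg_le_upperGammaNat m (by positivity) (hy M.le_succ)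
  have hyN : y N ≤ b * √t := by
    simp only [y]; gcongr; exact Nat.floor_le ht
  have hyN1 : b * √t ≤ y (N + 1) := by
    simp only [y]; push_cast; gcongr; exact (Nat.lt_floor_add_one t).le
  have hhead := antitoneOn_upperGammaNat_sub_mul_exp_neg m (by positivity)
    (pow_le_pow_left₀ (by positivity) hyN m) Set.self_mem_Ici hyN1 hyN1
  have : 0 ≤ y N ^ m * exp (-(b * √t)) := by positivity
  simp only [mul_sum, ← mul_assoc, neg_mul] at habel hhead ⊢
  linarith

/-- For `k ∈ ℕ`, `b > 0` and `t ≥ 0`,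
`Σ_{n > ⌊t⌋} n^k exp(-b √n) ≤ b^{-(2k+2)} (2k+3)! max{1, b² t}^{k+1} exp(-b √t)`. -/
theorem sum_pow_exp_sqrt_tail (k : ℕ) (b t : ℝ) (hb : 0 < b) (ht : 0 ≤ t) :
    (∑' n : ℕ, if Nat.floor t < n then (n : ℝ) ^ k * Real.exp (-b * Real.sqrt n) else 0) ≤
      ((2 * k + 3).factorial : ℝ) * max 1 (b ^ 2 * t) ^ (k + 1) *
        Real.exp (-b * Real.sqrt t) / b ^ (2 * k + 2) := by
  have hpartial (M : ℕ) : ∑ n ∈ range M, (if ⌊t⌋₊ < n then (n : ℝ) ^ k * exp (-b * √n) else 0)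
      ≤ upperGammaNat (2 * k + 2) (b * √t) / b ^ (2 * k + 2) := by
    rw [le_div_iff₀ (by positivity), ← sum_filter, mul_comm]
    refine le_trans ?_
      (mul_sum_Ioc_floor_pow_mul_exp_neg_sqrt_le k hb ht (M := ⌊t⌋₊ + M) (by omega))
    gcongr
    intro n hn
    simp only [mem_filter, mem_range, mem_Ioc] at hn ⊢
    omega
  have hmax : max 1 (b * √t) ^ (2 * k + 2) = max 1 (b ^ 2 * t) ^ (k + 1) := by
    rw [show 2 * k + 2 = 2 * (k + 1) by ring, pow_mul,
      pow_left_monotoneOn.map_max (by simp) (by simp; positivity), one_pow, mul_pow, sq_sqrt ht]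
  calc _ ≤ upperGammaNat (2 * k + 2) (b * √t) / b ^ (2 * k + 2) :=
        Real.tsum_le_of_sum_range_le (fun n => by split_ifs <;> positivity) hpartial
    _ ≤ _ := by
      gcongr
      simpa [hmax, neg_mul] using upperGammaNat_le (2 * k + 2) (by positivity : 0 ≤ b * √t)
end

section
/- Let E be a complex Banach space, I ⊆ ℝ an interval, δ > 0, and let I_δ := {u ∈ ℂ : dist(u, I) < δ} be the open δ-fattening of I in ℂ. Define B(0) = 1 and B(k) = k^k for integers k ≥ 1. Let Φ : I_δ → E be holomorphic and suppose there are C > 0 and k ∈ ℕ such that ‖Φ(u)‖ ≤ C · B(k) · (δ − dist(u, I))^{−k} for all u ∈ I_δ. Then ‖Φ'(u)‖ ≤ C · B(k+1) · (δ − dist(u, I))^{−(k+1)} for all u ∈ I_δ. -/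
open Metric

/-- Cauchy-estimate bootstrap for Banach-space valued holomorphic functions on a complex
fattening `I_δ` of a real interval `I`: a bound `‖Φ(u)‖ ≤ C k^k (δ - dist(u,I))^{-k}` improves to
`‖Φ'(u)‖ ≤ C (k+1)^{k+1} (δ - dist(u,I))^{-(k+1)}`.  (Here `B(0) = 0^0 = 1`.) -/
theorem cauchy_bootstrap {E : Type*} [NormedAddCommGroup E] [NormedSpace ℂ E]
    [CompleteSpace E] (I : Set ℝ) (hne : I.Nonempty) (hI : I.OrdConnected)
    (δ : ℝ) (hδ : 0 < δ) (Φ : ℂ → E) (C : ℝ) (hC : 0 < C) (k : ℕ)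
    (hol : DifferentiableOn ℂ Φ {u : ℂ | Metric.infDist u (Complex.ofReal '' I) < δ})
    (hbound : ∀ u : ℂ, Metric.infDist u (Complex.ofReal '' I) < δ →
      ‖Φ u‖ ≤ C * (k : ℝ) ^ k / (δ - Metric.infDist u (Complex.ofReal '' I)) ^ k) :
    ∀ u : ℂ, Metric.infDist u (Complex.ofReal '' I) < δ →
      ‖deriv Φ u‖ ≤
        C * ((k + 1 : ℕ) : ℝ) ^ (k + 1) /
          (δ - Metric.infDist u (Complex.ofReal '' I)) ^ (k + 1) := by
  intro u hu
  set S := Complex.ofReal '' I with hS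
  set d : ℝ := δ - Metric.infDist u S with hd
  have hd0 : 0 < d := sub_pos.2 hu
  have hkk : ((k : ℝ)) ^ k ≠ 0 := by
    rcases k with _ | k
    · norm_num
    · positivity
  -- Step 1: bound for every radius 0 < r < d
  have key : ∀ r : ℝ, 0 < r → r < d → ‖deriv Φ u‖ ≤ C * (k : ℝ) ^ k / ((d - r) ^ k * r) := by
    intro r hr hrd
    have hdr : 0 < d - r := sub_pos.2 hrd
    have hsub : closedBall u r ⊆ {v : ℂ | Metric.infDist v S < δ} := by
      intro z hz
      have h1 : Metric.infDist z S ≤ Metric.infDist u S + dist z u :=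
        Metric.infDist_le_infDist_add_dist
      have h2 : dist z u ≤ r := mem_closedBall.1 hz
      simp only [Set.mem_setOf_eq]
      have : Metric.infDist u S + r < δ := by
        rw [hd] at hrd; linarith
      linarith
    have hdiff : DiffContOnCl ℂ Φ (ball u r) := by
      refine DifferentiableOn.diffContOnCl ?_
      rw [closure_ball u hr.ne']
      exact hol.mono hsub
    have hB : ∀ z ∈ sphere u r, ‖Φ z‖ ≤ C * (k : ℝ) ^ k / (d - r) ^ k := by
      intro z hz
      have hzmem : z ∈ closedBall u r := sphere_subset_closedBall hz
      have hz2 : Metric.infDist z S < δ := hsub hzmem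
      refine (hbound z hz2).trans ?_
      have h0 : Metric.infDist z S ≤ Metric.infDist u S + dist z u :=
        Metric.infDist_le_infDist_add_dist
      have h1 : Metric.infDist z S ≤ Metric.infDist u S + r := by
        have := mem_closedBall.1 hzmem; linarith
      have h2 : d - r ≤ δ - Metric.infDist z S := by rw [hd]; linarith
      have hnum : 0 ≤ C * (k : ℝ) ^ k := by positivity
      exact div_le_div_of_nonneg_left hnum (by positivity) (pow_le_pow_left₀ hdr.le h2 k)
    have := Complex.norm_deriv_le_of_forall_mem_sphere_norm_le hr hdiff hB
    calc ‖deriv Φ u‖ ≤ C * (k : ℝ) ^ k / (d - r) ^ k / r := this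
      _ = C * (k : ℝ) ^ k / ((d - r) ^ k * r) := by rw [div_div]
  -- Step 2: take r → d/(k+1)
  set r0 : ℝ := d / (k + 1) with hr0
  have hr0pos : 0 < r0 := by positivity
  have hr0le : r0 ≤ d := by
    rw [hr0, div_le_iff₀ (by positivity)]
    nlinarith [mul_nonneg hd0.le (Nat.cast_nonneg (α := ℝ) k)]
  have hlim : Filter.Tendsto (fun r : ℝ => C * (k : ℝ) ^ k / ((d - r) ^ k * r))
      (nhdsWithin r0 (Set.Ioo 0 r0)) (nhds (C * (k : ℝ) ^ k / ((d - r0) ^ k * r0))) := by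
    apply Filter.Tendsto.mono_left _ nhdsWithin_le_nhds
    have hden : (d - r0) ^ k * r0 ≠ 0 := by
      rcases Nat.eq_zero_or_pos k with hk | hk
      · simp [hk, hr0pos.ne']
      · have hr0d : r0 < d := by
          rw [hr0, div_lt_iff₀ (by positivity)]
          nlinarith [mul_pos hd0 (show (0:ℝ) < (k:ℝ) from by exact_mod_cast hk)]
        have : (0:ℝ) < d - r0 := sub_pos.2 hr0d
        positivity
    exact Filter.Tendsto.div tendsto_const_nhds
      ((((continuous_const.sub continuous_id).pow k).mul continuous_id).tendsto r0) hden
  have hNB : (nhdsWithin r0 (Set.Ioo 0 r0)).NeBot := right_nhdsWithin_Ioo_neBot hr0pos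
  have hle : ‖deriv Φ u‖ ≤ C * (k : ℝ) ^ k / ((d - r0) ^ k * r0) := by
    refine ge_of_tendsto hlim ?_
    filter_upwards [self_mem_nhdsWithin] with r hr
    exact key r hr.1 (hr.2.trans_le hr0le)
  refine hle.trans_eq ?_
  -- algebraic identity
  have hk1 : ((k : ℝ) + 1) ≠ 0 := by positivity
  have hdne : d ≠ 0 := hd0.ne'
  have h1 : d - r0 = d * k / (k + 1) := by
    rw [hr0]; field_simp; ring
  rw [h1]
  rw [div_pow, mul_pow, hr0]
  push_cast
  field_simp
  ring
end
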